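/- Let C = {c_1,…,c_n} ⊆ ℝ^d be a set of n distinct points. Then every ordering in Ψ(C) is protrusive: if a finite multiset V of points in ℝ^d distinguishes C and Σ_V^C = (c_{σ(1)},…,c_{σ(n)}), then for every i ∈ {1,…,n−1}, the point c_{σ(i+1)} does not lie in the convex hull of {c_{σ(1)},…,c_{σ(i)}}. -/

import Mathlib

/-- `sumDist V x = Σ_{v ∈ V} ‖x − v‖` (with multiplicity). -/
noncomputable def sumDist {d : ℕ} (V : Multiset (EuclideanSpace ℝ (Fin d)))
    (x : EuclideanSpace ℝ (Fin d)) : ℝ :=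
  (V.map fun v => dist x v).sum

/-- A tuple `(x_1, …, x_n)` in `ℝ^d` is protrusive if for every `i ∈ {1, …, n−1}`,
the point `x_{i+1}` does not lie in the convex hull of `{x_1, …, x_i}`. -/
def Protrusive {d n : ℕ} (σ : Fin n → EuclideanSpace ℝ (Fin d)) : Prop :=
  ∀ i : ℕ, ∀ h : i + 1 < n,
    σ ⟨i + 1, h⟩ ∉ convexHull ℝ (σ '' {j : Fin n | (j : ℕ) ≤ i})

lemma sumDist_convexOn {d : ℕ} (V : Multiset (EuclideanSpace ℝ (Fin d))) :
    ConvexOn ℝ Set.univ (sumDist V) := by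
  induction V using Multiset.induction with
  | empty =>
      have : sumDist (0 : Multiset (EuclideanSpace ℝ (Fin d))) = fun _ => (0 : ℝ) := by
        funext x; simp [sumDist]
      rw [this]
      exact convexOn_const (0 : ℝ) convex_univ
  | cons a V ih =>
      have : sumDist (a ::ₘ V) = fun x => dist x a + sumDist V x := by
        funext x; simp [sumDist]
      rw [this]
      exact (convexOn_dist a convex_univ).add ih

/-- Every ordering in `Ψ(C)` is protrusive: if a finite multiset `V` of points of
`ℝ^d` distinguishes the `n`-element set `C` and `σ` is the ordering `Σ_V^C` (an
injective enumeration of `C` along which `D_V` is strictly increasing), then for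
every `i ∈ {1, …, n−1}` the point `σ(i+1)` is not in the convex hull of
`{σ(1), …, σ(i)}`. -/
theorem ordering_protrusive (d n : ℕ) (C : Finset (EuclideanSpace ℝ (Fin d)))
    (hC : C.card = n) (V : Multiset (EuclideanSpace ℝ (Fin d)))
    (hdist : Set.InjOn (sumDist V) ↑C)
    (σ : Fin n → EuclideanSpace ℝ (Fin d))
    (hinj : Function.Injective σ) (hmem : ∀ i, σ i ∈ C)
    (hmono : StrictMono fun i => sumDist V (σ i)) :
    Protrusive σ := by
  intro i h hmemhull
  have hconv : ConvexOn ℝ (convexHull ℝ (σ '' {j : Fin n | (j : ℕ) ≤ i})) (sumDist V) :=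
    (sumDist_convexOn V).subset (Set.subset_univ _) (convex_convexHull _ _)
  obtain ⟨y, hy, hle⟩ := hconv.exists_ge_of_mem_convexHull (subset_convexHull ℝ _) hmemhull
  obtain ⟨j, hj, rfl⟩ := hy
  have hlt : sumDist V (σ j) < sumDist V (σ ⟨i + 1, h⟩) := by
    apply hmono
    have hj' : (j : ℕ) ≤ i := hj
    exact Fin.lt_def.mpr (lt_of_le_of_lt hj' (Nat.lt_succ_self i))
  exact absurd hle (not_le.mpr hlt)
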